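/- Let $\mathcal{C}$ be an abelian category and $X$ an exact, locally nilpotent endofunctor. Define $\operatorname{Kopf}_X\colon \mathcal{C}^{T(X)} \to \mathcal{C}$ by $\mathsf{M} \mapsto \operatorname{coker}(h_{\mathsf{M}})$ and $S\colon \mathcal{C} \to \mathcal{C}^{T(X)}$ by $M \mapsto (X(M) \xrightarrow{0} M)$. Then: (1) $\operatorname{Kopf}_X$ is left adjoint to $S$; (2) $\operatorname{Kopf}_X f_!(M) \cong M$ naturally in $M$; (3) if $\operatorname{Kopf}_X(\mathsf{M}) = 0$ then $\mathsf{M} = 0$. -/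

import Mathlib

open CategoryTheory Limits

universe v u

variable {C : Type u} [Category.{v} C]

/-- The power `X^n` of an endofunctor, with `X^(n+1) = X^n ⋙ X`. -/
def fpow (X : C ⥤ C) : ℕ → (C ⥤ C)
  | 0 => 𝟭 C
  | n + 1 => fpow X n ⋙ X

/-- `X` is locally nilpotent if every object is annihilated by some power of `X`. -/
def LocallyNilpotent (X : C ⥤ C) : Prop :=
  ∀ M : C, ∃ n : ℕ, IsZero ((fpow X n).obj M)

/-- The category `(X ⇓ Id)` of `X`-modules, identified with the Eilenberg–Moore category
of the free monad on `X`. -/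
structure XMod (X : C ⥤ C) : Type max u v where
  carrier : C
  str : X.obj carrier ⟶ carrier

/-- Morphisms of `X`-modules. -/
@[ext]
structure XModHom {X : C ⥤ C} (M N : XMod X) : Type v where
  hom : M.carrier ⟶ N.carrier
  comm : M.str ≫ hom = X.map hom ≫ N.str

instance (X : C ⥤ C) : Category (XMod X) where
  Hom := XModHom
  id M := ⟨𝟙 M.carrier, by simp⟩
  comp f g := ⟨f.hom ≫ g.hom, by
    rw [← Category.assoc, f.comm, Category.assoc, g.comm, ← Category.assoc, ← Functor.map_comp]⟩
  id_comp f := by apply XModHom.ext; simp [CategoryStruct.id, CategoryStruct.comp]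
  comp_id f := by apply XModHom.ext; simp [CategoryStruct.id, CategoryStruct.comp]
  assoc f g h := by apply XModHom.ext; simp [CategoryStruct.comp]

@[simp] lemma XMod.id_hom {X : C ⥤ C} (M : XMod X) : (𝟙 M : XModHom M M).hom = 𝟙 M.carrier := rfl
@[simp] lemma XMod.comp_hom {X : C ⥤ C} {M N P : XMod X} (f : M ⟶ N) (g : N ⟶ P) :
    (f ≫ g).hom = f.hom ≫ g.hom := rfl

/-- `F` is the free `X`-module `f₁(N)` on `N`, encoded via the universal
property of the free–forgetful adjunction `f₁ ⊣ f⋆`. -/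
structure IsFreeXModOn (X : C ⥤ C) (F : XMod X) (N : C) where
  unit : N ⟶ F.carrier
  lift : ∀ (P : XMod X), (N ⟶ P.carrier) → (F ⟶ P)
  fac : ∀ (P : XMod X) (g : N ⟶ P.carrier), unit ≫ (lift P g).hom = g
  uniq : ∀ (P : XMod X) (g : N ⟶ P.carrier) (k : F ⟶ P), unit ≫ k.hom = g → k = lift P g

variable [Abelian C] (X : C ⥤ C)

/-- The top functor `Kopf_X : 𝒞^{T(X)} ⥤ 𝒞`, sending a module to the cokernel of its
structure map. -/
noncomputable def KopfFunctor : XMod X ⥤ C where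
  obj M := cokernel M.str
  map {M N} f := cokernel.map M.str N.str (X.map f.hom) f.hom f.comm
  map_id M := by
    apply coequalizer.hom_ext
    simp [cokernel.map]
  map_comp f g := by
    apply coequalizer.hom_ext
    simp [cokernel.map]

/-- The functor `S : 𝒞 ⥤ 𝒞^{T(X)}` endowing an object with the zero structure map. -/
def SFunctor : C ⥤ XMod X where
  obj M := ⟨M, 0⟩
  map f := ⟨f, by simp⟩
  map_id M := by apply XModHom.ext; rfl
  map_comp f g := by apply XModHom.ext; rfl

/- Maps `Kopf_X M ⟶ N` are maps `M ⟶ N` killing the structure map, which are exactly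
the module maps `M ⟶ S N`; this gives (1). Composing with the free–forgetful adjunction gives
`Kopf_X f₁ ⊣ 𝟭`, so the unit `M ⟶ Kopf_X (f₁ M)` is an isomorphism by Yoneda, which is (2).
For (3), `Kopf_X M = 0` makes `X M ⟶ M` epi; as `X` preserves epimorphisms, so are all the iterates
`X^n M ⟶ M`, and one of them has zero source by local nilpotence. -/

namespace XMod

def strPow {X : C ⥤ C} (M : XMod X) : ∀ n : ℕ, (fpow X n).obj M.carrier ⟶ M.carrier
  | 0 => 𝟙 M.carrier
  | n + 1 => X.map (strPow M n) ≫ M.str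

omit [Abelian C] in
@[ext]
lemma hom_ext {X : C ⥤ C} {M N : XMod X} {f g : M ⟶ N} (h : f.hom = g.hom) : f = g :=
  XModHom.ext h

omit [Abelian C] in
lemma epi_strPow {X : C ⥤ C} [X.PreservesEpimorphisms] (M : XMod X) [Epi M.str] :
    ∀ n, Epi (M.strPow n)
  | 0 => inferInstanceAs (Epi (𝟙 M.carrier))
  | n + 1 => by
    have := epi_strPow M n
    exact epi_comp (X.map (M.strPow n)) M.str

omit [Abelian C] in
lemma isZero_carrier_of_epi_str [HasZeroMorphisms C] {X : C ⥤ C} [X.PreservesEpimorphisms]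
    (hX : LocallyNilpotent X) (M : XMod X) [Epi M.str] : IsZero M.carrier := by
  obtain ⟨n, hn⟩ := hX M.carrier
  have := M.epi_strPow n
  exact hn.of_epi (M.strPow n)

lemma str_comp_hom_eq_zero {M : XMod X} {N : C} (f : M ⟶ (SFunctor X).obj N) :
    M.str ≫ f.hom = 0 :=
  f.comm.trans comp_zero

end XMod

noncomputable def kopfHomEquiv (M : XMod X) (N : C) :
    (cokernel M.str ⟶ N) ≃ (M ⟶ (SFunctor X).obj N) where
  toFun k := ⟨cokernel.π M.str ≫ k, by simp [SFunctor]⟩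
  invFun f := cokernel.desc M.str f.hom (XMod.str_comp_hom_eq_zero X f)
  left_inv k := by ext; exact cokernel.π_desc _ _ _
  right_inv f := by ext; exact cokernel.π_desc _ _ _

@[simp]
lemma π_kopfHomEquiv_symm_apply {M : XMod X} {N : C} (f : M ⟶ (SFunctor X).obj N) :
    cokernel.π M.str ≫ (kopfHomEquiv X M N).symm f = f.hom :=
  cokernel.π_desc _ _ _

noncomputable def kopfAdjunction : KopfFunctor X ⊣ SFunctor X :=
  Adjunction.mkOfHomEquiv
    { homEquiv := kopfHomEquiv X
      homEquiv_naturality_left_symm := fun f g => by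
        apply coequalizer.hom_ext
        simp only [KopfFunctor, cokernel.map]
        erw [π_kopfHomEquiv_symm_apply, cokernel.π_desc_assoc, Category.assoc,
          π_kopfHomEquiv_symm_apply]
        rfl
      homEquiv_naturality_right := fun f g => by
        ext
        exact (Category.assoc _ _ _).symm }

namespace IsFreeXModOn

variable {X} {F : XMod X} {N : C}

omit [Abelian C] in
def homEquiv (h : IsFreeXModOn X F N) (P : XMod X) : (F ⟶ P) ≃ (N ⟶ P.carrier) where
  toFun k := h.unit ≫ k.hom
  invFun := h.lift P
  left_inv k := (h.uniq P _ k rfl).symm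
  right_inv := h.fac P

lemma isIso_unit_comp_cokernelπ (h : IsFreeXModOn X F N) :
    IsIso (h.unit ≫ cokernel.π F.str) := by
  rw [isIso_iff_coyoneda_map_bijective]
  intro T
  have hcomp : (fun g => (h.unit ≫ cokernel.π F.str) ≫ g) =
      h.homEquiv ((SFunctor X).obj T) ∘ kopfHomEquiv X F T := by
    funext g
    exact Category.assoc _ _ _
  rw [hcomp]
  exact (h.homEquiv _).bijective.comp (kopfHomEquiv X F T).bijective

end IsFreeXModOn

theorem kopf_adjunction_and_properties
    [PreservesFiniteColimits X]
    (hX : LocallyNilpotent X) :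
    Nonempty (KopfFunctor X ⊣ SFunctor X) ∧
    (∀ (M : C) (F : XMod X) (h : IsFreeXModOn X F M), IsIso (h.unit ≫ cokernel.π F.str)) ∧
    (∀ M : XMod X, IsZero (cokernel M.str) → IsZero M.carrier) := by
  refine ⟨⟨kopfAdjunction X⟩, fun _ _ h => h.isIso_unit_comp_cokernelπ, fun M hM => ?_⟩
  have : Epi M.str := Abelian.epi_of_cokernel_π_eq_zero _ (hM.eq_zero_of_tgt _)
  exact M.isZero_carrier_of_epi_str hX
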